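/- Let A ∈ ℝ^{n×n}, B ∈ ℝ^{n×m}, and fix an index t. Suppose K_t, K_{t+1} ∈ ℝ^{m×n}, invertible matrices H_t, H_{t+1} and matrices L_t, L_{t+1} satisfy A+BK_t = H_t L_t H_t^{-1}, A+BK_{t+1} = H_{t+1} L_{t+1} H_{t+1}^{-1}, ‖L_t‖ ≤ 1−γ, ‖H_{t+1}^{-1} H_t‖ ≤ 1 + γ/2, with 0 < γ ≤ 1. Let W and matrices X_t, X_{t+1}, X^s_t, X^s_{t+1} satisfy X_{t+1} = (A+BK_t) X_t (A+BK_t)ᵀ + W, X^s_t = (A+BK_t) X^s_t (A+BK_t)ᵀ + W, and X^s_{t+1} = (A+BK_{t+1}) X^s_{t+1} (A+BK_{t+1})ᵀ + W. Then ‖H_{t+1}^{-1}(X_{t+1} − X^s_{t+1})(H_{t+1}^{-1})ᵀ‖ ≤ (1 − γ/2)² ‖H_t^{-1}(X_t − X^s_t)(H_t^{-1})ᵀ‖ + ‖H_{t+1}^{-1}‖² ‖X^s_t − X^s_{t+1}‖. -/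

import Mathlib

open Matrix
open scoped Matrix.Norms.L2Operator

/-!
Subtracting the two Lyapunov recursions driven by `A + B Kₜ` cancels the noise `W`, so
`Xₜ₊₁ - Xˢₜ₊₁ = P (Xₜ - Xˢₜ) Pᵀ + (Xˢₜ - Xˢₜ₊₁)` with `P = Hₜ Lₜ Hₜ⁻¹`. Conjugating by
`Hₜ₊₁⁻¹`, the first term becomes `M Yₜ Mᵀ` with `M = Hₜ₊₁⁻¹ Hₜ Lₜ` and `Yₜ` the conjugated
error at time `t`, and `‖M‖ ≤ (1 + γ/2)(1 - γ) ≤ 1 - γ/2`.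
-/

namespace Matrix

variable {R : Type*} [CommRing R] {m n : Type*} [Fintype n]

theorem sub_eq_of_lyapunov_eq {P W X X' Xs Xs' : Matrix n n R}
    (hX : X' = P * X * Pᵀ + W) (hXs : Xs = P * Xs * Pᵀ + W) :
    X' - Xs' = P * (X - Xs) * Pᵀ + (Xs - Xs') := by
  have hW : W = Xs - P * Xs * Pᵀ := eq_sub_of_add_eq' hXs.symm
  rw [hX, hW]
  noncomm_ring

theorem mul_conj_mul_transpose_eq (G : Matrix m n R) (H H' L X : Matrix n n R) :
    G * (H * L * H' * X * (H * L * H')ᵀ) * Gᵀ =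
      (G * H * L) * (H' * X * H'ᵀ) * (G * H * L)ᵀ := by
  simp only [transpose_mul, Matrix.mul_assoc]

theorem l2_opNorm_mul_mul_transpose_le [Fintype m] [DecidableEq m] [DecidableEq n]
    (M : Matrix m n ℝ) (Y : Matrix n n ℝ) :
    ‖M * Y * Mᵀ‖ ≤ ‖M‖ ^ 2 * ‖Y‖ := by
  have hMT : ‖Mᵀ‖ = ‖M‖ := by
    rw [← conjTranspose_eq_transpose_of_trivial, l2_opNorm_conjTranspose]
  calc ‖M * Y * Mᵀ‖ ≤ ‖M‖ * ‖Y‖ * ‖Mᵀ‖ :=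
        (l2_opNorm_mul _ _).trans (mul_le_mul_of_nonneg_right (l2_opNorm_mul _ _) (norm_nonneg _))
    _ = ‖M‖ ^ 2 * ‖Y‖ := by rw [hMT]; ring

end Matrix

theorem one_step_contraction_general
    {n m : ℕ}
    (A : Matrix (Fin n) (Fin n) ℝ) (B : Matrix (Fin n) (Fin m) ℝ)
    (Kt : Matrix (Fin m) (Fin n) ℝ)
    (Ht Ht1 Lt : Matrix (Fin n) (Fin n) ℝ)
    (γ : ℝ)
    (hfact : A + B * Kt = Ht * Lt * Ht⁻¹)
    (hLt : ‖Lt‖ ≤ 1 - γ)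
    (hHH : ‖Ht1⁻¹ * Ht‖ ≤ 1 + γ / 2)
    (W Xt Xt1 Xst Xst1 : Matrix (Fin n) (Fin n) ℝ)
    (hX : Xt1 = (A + B * Kt) * Xt * (A + B * Kt)ᵀ + W)
    (hXs : Xst = (A + B * Kt) * Xst * (A + B * Kt)ᵀ + W) :
    ‖Ht1⁻¹ * (Xt1 - Xst1) * (Ht1⁻¹)ᵀ‖ ≤
      (1 - γ / 2) ^ 2 * ‖Ht⁻¹ * (Xt - Xst) * (Ht⁻¹)ᵀ‖ +
      ‖Ht1⁻¹‖ ^ 2 * ‖Xst - Xst1‖ := by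
  set M := Ht1⁻¹ * Ht * Lt
  have hdecomp : Ht1⁻¹ * (Xt1 - Xst1) * (Ht1⁻¹)ᵀ =
      M * (Ht⁻¹ * (Xt - Xst) * (Ht⁻¹)ᵀ) * Mᵀ + Ht1⁻¹ * (Xst - Xst1) * (Ht1⁻¹)ᵀ := by
    rw [sub_eq_of_lyapunov_eq hX hXs, Matrix.mul_add, Matrix.add_mul, hfact,
      mul_conj_mul_transpose_eq]
  have hM : ‖M‖ ≤ 1 - γ / 2 :=
    calc ‖M‖ ≤ ‖Ht1⁻¹ * Ht‖ * ‖Lt‖ := norm_mul_le _ _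
      _ ≤ (1 + γ / 2) * (1 - γ) :=
        mul_le_mul hHH hLt (norm_nonneg _) ((norm_nonneg _).trans hHH)
      _ ≤ 1 - γ / 2 := by nlinarith [sq_nonneg γ]
  have hM_sq : ‖M‖ ^ 2 ≤ (1 - γ / 2) ^ 2 := pow_le_pow_left₀ (norm_nonneg _) hM 2
  rw [hdecomp]
  refine (norm_add_le _ _).trans (add_le_add ?_ (l2_opNorm_mul_mul_transpose_le _ _))
  exact (l2_opNorm_mul_mul_transpose_le _ _).trans
    (mul_le_mul_of_nonneg_right hM_sq (norm_nonneg _))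

/-- **One-step contraction inequality** (Equation (B.3) in the proof of Lemma B.1):
the conjugated covariance error contracts by `(1 - γ/2)²` up to the drift of the
steady-state covariances. -/
theorem one_step_contraction
    {n m : ℕ}
    (A : Matrix (Fin n) (Fin n) ℝ) (B : Matrix (Fin n) (Fin m) ℝ)
    (Kt Kt1 : Matrix (Fin m) (Fin n) ℝ)
    (Ht Ht1 Lt Lt1 : Matrix (Fin n) (Fin n) ℝ)
    (γ : ℝ) (hγ0 : 0 < γ) (hγ1 : γ ≤ 1)
    (hHtUnit : IsUnit Ht.det) (hHt1Unit : IsUnit Ht1.det)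
    (hfact : A + B * Kt = Ht * Lt * Ht⁻¹)
    (hfact1 : A + B * Kt1 = Ht1 * Lt1 * Ht1⁻¹)
    (hLt : ‖Lt‖ ≤ 1 - γ)
    (hHH : ‖Ht1⁻¹ * Ht‖ ≤ 1 + γ / 2)
    (W Xt Xt1 Xst Xst1 : Matrix (Fin n) (Fin n) ℝ)
    (hX : Xt1 = (A + B * Kt) * Xt * (A + B * Kt)ᵀ + W)
    (hXs : Xst = (A + B * Kt) * Xst * (A + B * Kt)ᵀ + W)
    (hXs1 : Xst1 = (A + B * Kt1) * Xst1 * (A + B * Kt1)ᵀ + W) :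
    ‖Ht1⁻¹ * (Xt1 - Xst1) * (Ht1⁻¹)ᵀ‖ ≤
      (1 - γ / 2) ^ 2 * ‖Ht⁻¹ * (Xt - Xst) * (Ht⁻¹)ᵀ‖ +
      ‖Ht1⁻¹‖ ^ 2 * ‖Xst - Xst1‖ :=
  one_step_contraction_general A B Kt Ht Ht1 Lt γ hfact hLt hHH W Xt Xt1 Xst Xst1 hX hXs
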